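/- For every integer k > 1, the family F_k = {x^k + y, y^k + x, xy} in K[x,y] satisfies: (a) d_reg(F_k) = k; (b) the ideal (F_k) contains x and y, so {x, y} is the reduced Gröbner basis for every term order; (c) x, y ∉ V_{F_k,k} but x, y ∈ V_{F_k,k+1}; hence sd_σ(F_k) = k+1 = d_reg(F_k) + 1 for every degree-compatible term order σ. -/

import Mathlib

open MvPolynomial

noncomputable section

/-- The total degree of a monomial exponent vector. -/
def mdeg {n : ℕ} (s : Fin n →₀ ℕ) : ℕ := s.sum fun _ e => e

/-- The top homogeneous component (homogeneous part of largest degree) of a polynomial. -/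
def topPart {n : ℕ} {K : Type*} [CommSemiring K] (f : MvPolynomial (Fin n) K) :
    MvPolynomial (Fin n) K :=
  homogeneousComponent f.totalDegree f

/-- `regAt F d` says that the degree-`d` part of the ideal generated by the top homogeneous
parts of the elements of `F` is all of `K[x₁,…,xₙ]_d`; the degree of regularity of `F` is the
least such `d`. -/
def regAt {n : ℕ} {K : Type*} [Field K] (F : Finset (MvPolynomial (Fin n) K)) (d : ℕ) : Prop :=
  ∀ p : MvPolynomial (Fin n) K, p.IsHomogeneous d →
    p ∈ Ideal.span (topPart '' (F : Set (MvPolynomial (Fin n) K)))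

/-- `V F d` : the smallest `K`-linear subspace containing all elements of `F` of total degree
at most `d`, and closed under multiplication by monomials as long as the degree stays `≤ d`. -/
def V {n : ℕ} {K : Type*} [Field K] (F : Finset (MvPolynomial (Fin n) K)) (d : ℕ) :
    Submodule K (MvPolynomial (Fin n) K) :=
  sInf {W | (∀ f ∈ F, f.totalDegree ≤ d → f ∈ W) ∧
    ∀ (s : Fin n →₀ ℕ), ∀ f ∈ W,
      (monomial s (1 : K) * f).totalDegree ≤ d → monomial s (1 : K) * f ∈ W}

/-- The leading monomial (exponent vector) of `f` with respect to a monomial order. -/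
def lm {n : ℕ} {K : Type*} [Field K] (m : MonomialOrder (Fin n))
    (f : MvPolynomial (Fin n) K) : Fin n →₀ ℕ :=
  m.toSyn.symm (f.support.sup fun s => m.toSyn s)

/-- A monomial order is degree-compatible if monomials of smaller degree are smaller. -/
def DegCompatible {n : ℕ} (m : MonomialOrder (Fin n)) : Prop :=
  ∀ s t : Fin n →₀ ℕ, mdeg s < mdeg t → m.toSyn s < m.toSyn t

/-- `G` is a Gröbner basis of `I` w.r.t. `m` : `G ⊆ I` and the leading monomial of every
nonzero element of `I` is divisible by the leading monomial of some nonzero element of `G`. -/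
def IsGrobnerBasis {n : ℕ} {K : Type*} [Field K] (m : MonomialOrder (Fin n))
    (I : Ideal (MvPolynomial (Fin n) K)) (G : Finset (MvPolynomial (Fin n) K)) : Prop :=
  (↑G : Set (MvPolynomial (Fin n) K)) ⊆ ↑I ∧
    ∀ f ∈ I, f ≠ 0 → ∃ g ∈ G, g ≠ 0 ∧ lm m g ≤ lm m f

/-- `G` is the reduced Gröbner basis: a Gröbner basis, monic, and no monomial occurring in an
element of `G` is divisible by the leading monomial of another element of `G`. -/
def IsReducedGB {n : ℕ} {K : Type*} [Field K] (m : MonomialOrder (Fin n))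
    (I : Ideal (MvPolynomial (Fin n) K)) (G : Finset (MvPolynomial (Fin n) K)) : Prop :=
  IsGrobnerBasis m I G ∧ (∀ g ∈ G, coeff (lm m g) g = 1) ∧
    ∀ g ∈ G, ∀ g' ∈ G, g ≠ g' → ∀ s ∈ g.support, ¬ lm m g' ≤ s

/-!
The top parts `x^k, y^k, xy` of `F_k` generate every monomial of degree `k`, while `x^e` for
`e < k` is divisible by none of them, so `d_reg(F_k) = k`.

In degree `k + 1` the linear algebra reaches `x`: `y (x^k + y) - x^(k-1) (xy) = y^2`, then
`y^k = y^(k-2) y^2` and `x = (y^k + x) - y^k`; symmetrically for `y`. As every element of `F_k`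
vanishes at `0`, `(F_k) = (x, y)` with reduced Gröbner basis `{x, y}`.

In degree `k` nothing cancels: in every element of `V_{F_k,k}` the coefficients of `x` and
`y^k` agree, as do those of `y` and `x^k`, and no other pure power of `x` or `y` occurs. The
generators satisfy this, and a nonconstant monomial multiple that stays in degree `≤ k` is taken
of an element without `x^k, y^k`, hence without any pure power, so the product has none either.
Under a degree-compatible order such an element has leading monomial neither `1` nor `x`
(it would need the larger `y^k`), so `V_{F_k,k}` contains no Gröbner basis of `(x, y)`.
-/

open Finsupp (single)

section

variable {σ : Type*}

/-- `F_k`, with `X i`, `X j` in the roles of `x`, `y`. -/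
def Fk (K : Type*) [CommRing K] [DecidableEq σ] [DecidableEq K] (k : ℕ) (i j : σ) :
    Finset (MvPolynomial σ K) :=
  {X i ^ k + X j, X j ^ k + X i, X i * X j}

def pureCoeffs (K : Type*) [CommSemiring K] (k : ℕ) (i j : σ) :
    Submodule K (MvPolynomial σ K) where
  carrier := {f | coeff (single i 1) f = coeff (single j k) f ∧
    ∀ l, l ≠ 1 → l ≠ k → coeff (single i l) f = 0}
  add_mem' := by
    rintro f g ⟨hf, hf'⟩ ⟨hg, hg'⟩
    exact ⟨by rw [coeff_add, coeff_add, hf, hg], fun l h1 hk => by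
      rw [coeff_add, hf' l h1 hk, hg' l h1 hk, add_zero]⟩
  zero_mem' := by simp
  smul_mem' := by
    rintro c f ⟨hf, hf'⟩
    exact ⟨by rw [coeff_smul, coeff_smul, hf], fun l h1 hk => by
      rw [coeff_smul, hf' l h1 hk, smul_zero]⟩

variable {K : Type*} {k : ℕ} {i j : σ}

section Monomials

variable [CommSemiring K]

lemma eq_single_of_le_single {u : σ →₀ ℕ} {a : ℕ} (h : u ≤ single i a) : u = single i (u i) :=
  Finsupp.support_subset_singleton.mp
    ((Finsupp.support_mono h).trans Finsupp.support_single_subset)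

lemma single_add_single_ne_single (hij : i ≠ j) (a : σ) (l : ℕ) :
    single i 1 + single j 1 ≠ single a l := by
  intro h
  by_cases ha : a = i
  · have := DFunLike.congr_fun h j
    simp [ha, hij] at this
  · have := DFunLike.congr_fun h i
    simp [hij, ha] at this

lemma X_mul_X_eq_monomial (i j : σ) :
    (X i * X j : MvPolynomial σ K) = monomial (single i 1 + single j 1) 1 := by
  rw [X, X, monomial_mul, one_mul]

variable [Nontrivial K]

lemma totalDegree_X_pow_mul_le (i : σ) (a : ℕ) (f : MvPolynomial σ K) :
    (X i ^ a * f).totalDegree ≤ a + f.totalDegree :=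
  (totalDegree_mul _ _).trans (by rw [totalDegree_X_pow])

lemma totalDegree_X_mul_X_le (i j : σ) : (X i * X j : MvPolynomial σ K).totalDegree ≤ 2 :=
  (totalDegree_mul _ _).trans (by rw [totalDegree_X, totalDegree_X])

end Monomials

section Family

variable [CommRing K] [DecidableEq σ] [DecidableEq K]

lemma Fk_comm : Fk K k j i = Fk K k i j := by
  rw [Fk, Fk, Finset.insert_comm, mul_comm]

lemma X_mem_span_Fk (hk : 1 < k) : X i ∈ Ideal.span (Fk K k i j : Set (MvPolynomial σ K)) := by
  obtain ⟨n, rfl⟩ := Nat.exists_eq_add_of_le' hk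
  have mem (f) (hf : f ∈ Fk K (n + 2) i j) :
      f ∈ Ideal.span (Fk K (n + 2) i j : Set (MvPolynomial σ K)) :=
    Ideal.subset_span hf
  have : (X i : MvPolynomial σ K) = (X j ^ (n + 2) + X i) - X j ^ (n + 1) * (X i ^ (n + 2) + X j)
      + X i ^ (n + 1) * X j ^ n * (X i * X j) := by ring
  rw [this]
  exact add_mem (sub_mem (mem _ (by simp [Fk])) (Ideal.mul_mem_left _ _ (mem _ (by simp [Fk]))))
    (Ideal.mul_mem_left _ _ (mem _ (by simp [Fk])))

lemma span_Fk_le_ker_constantCoeff (hk : k ≠ 0) :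
    Ideal.span (Fk K k i j : Set (MvPolynomial σ K)) ≤ RingHom.ker constantCoeff := by
  rw [Ideal.span_le]
  intro f hf
  simp only [Fk, Finset.coe_insert, Finset.coe_singleton, Set.mem_insert_iff,
    Set.mem_singleton_iff] at hf
  rcases hf with rfl | rfl | rfl <;> simp [hk]

lemma mem_pureCoeffs_of_mem_Fk (hk : 1 < k) (hij : i ≠ j) :
    ∀ f ∈ Fk K k i j, f ∈ pureCoeffs K k i j := by
  intro f hf
  simp only [Fk, Finset.mem_insert, Finset.mem_singleton] at hf
  have hk0 : k ≠ 0 := by omega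
  have hk1 : k ≠ 1 := by omega
  rcases hf with rfl | rfl | rfl <;>
  exact ⟨by simp [coeff_X_pow, coeff_X, X_mul_X_eq_monomial, coeff_monomial,
      Finsupp.single_eq_single_iff, single_add_single_ne_single hij, hij, hij.symm, hk0, hk1,
      hk1.symm],
    fun l hl1 hlk => by simp [coeff_X_pow, coeff_X, X_mul_X_eq_monomial, coeff_monomial,
      Finsupp.single_eq_single_iff, single_add_single_ne_single hij, hk0, hl1.symm, hlk.symm]⟩

end Family

section PureCoeffs

variable [CommSemiring K]

lemma coeff_single_eq_zero_of_mem_pureCoeffs {f : MvPolynomial σ K}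
    (hf : f ∈ pureCoeffs K k i j) (hi : coeff (single i k) f = 0)
    (hj : coeff (single j k) f = 0) (l : ℕ) : coeff (single i l) f = 0 := by
  obtain ⟨h1, hl⟩ := hf
  by_cases hl1 : l = 1
  · rw [hl1, h1, hj]
  by_cases hlk : l = k
  · rw [hlk, hi]
  exact hl l hl1 hlk

lemma mem_pureCoeffs_of_coeff_single_eq_zero {f : MvPolynomial σ K}
    (hi : ∀ l, coeff (single i l) f = 0) (hj : ∀ l, coeff (single j l) f = 0) :
    f ∈ pureCoeffs K k i j :=
  ⟨by rw [hi, hj], fun l _ _ => hi l⟩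

lemma coeff_single_monomial_mul_eq_zero {f : MvPolynomial σ K}
    (hf : ∀ l, coeff (single i l) f = 0) (s : σ →₀ ℕ) (c : K) (l : ℕ) :
    coeff (single i l) (monomial s c * f) = 0 := by
  rw [coeff_monomial_mul']
  split_ifs with hs
  · rw [eq_single_of_le_single hs, ← Finsupp.single_tsub, hf, mul_zero]
  · rfl

lemma coeff_eq_zero_of_totalDegree_monomial_mul_le {f : MvPolynomial σ K} {s u : σ →₀ ℕ}
    (hs : s ≠ 0) (hdeg : (monomial s (1 : K) * f).totalDegree ≤ k) (hu : k ≤ u.degree) :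
    coeff u f = 0 := by
  by_contra hfu
  have hmem : s + u ∈ (monomial s (1 : K) * f).support := by
    rw [mem_support_iff, coeff_monomial_mul, one_mul]
    exact hfu
  have hle : (s + u).degree ≤ k := (le_totalDegree hmem).trans hdeg
  have hs0 : s.degree ≠ 0 := by rwa [ne_eq, Finsupp.degree_eq_zero_iff]
  rw [map_add] at hle
  omega

lemma monomial_mul_mem_inf_pureCoeffs {f : MvPolynomial σ K}
    (hf : f ∈ pureCoeffs K k i j ⊓ pureCoeffs K k j i) (s : σ →₀ ℕ)
    (hdeg : (monomial s (1 : K) * f).totalDegree ≤ k) :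
    monomial s (1 : K) * f ∈ pureCoeffs K k i j ⊓ pureCoeffs K k j i := by
  rcases eq_or_ne s 0 with rfl | hs
  · rwa [monomial_zero', C_1, one_mul]
  have top (a : σ) : coeff (single a k) f = 0 :=
    coeff_eq_zero_of_totalDegree_monomial_mul_le hs hdeg (by simp)
  have pure_i := coeff_single_monomial_mul_eq_zero
    (coeff_single_eq_zero_of_mem_pureCoeffs hf.1 (top i) (top j)) s 1
  have pure_j := coeff_single_monomial_mul_eq_zero
    (coeff_single_eq_zero_of_mem_pureCoeffs hf.2 (top j) (top i)) s 1
  exact ⟨mem_pureCoeffs_of_coeff_single_eq_zero pure_i pure_j,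
    mem_pureCoeffs_of_coeff_single_eq_zero pure_j pure_i⟩

lemma X_notMem_pureCoeffs [Nontrivial K] [DecidableEq σ] (hk : k ≠ 1) (hij : i ≠ j) :
    (X i : MvPolynomial σ K) ∉ pureCoeffs K k i j := by
  rintro ⟨h, -⟩
  simp [coeff_X, Finsupp.single_eq_single_iff, hij, hk.symm] at h

end PureCoeffs

section SpanOfDegree

variable {n : ℕ} [Field K] {F : Finset (MvPolynomial (Fin n) K)} {d : ℕ}

lemma mem_V_of_mem {f : MvPolynomial (Fin n) K} (hf : f ∈ F) (hd : f.totalDegree ≤ d) :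
    f ∈ V F d :=
  Submodule.mem_sInf.mpr fun _ hW => hW.1 f hf hd

lemma monomial_mul_mem_V {f : MvPolynomial (Fin n) K} (hf : f ∈ V F d) (s : Fin n →₀ ℕ)
    (hd : (monomial s (1 : K) * f).totalDegree ≤ d) : monomial s (1 : K) * f ∈ V F d :=
  Submodule.mem_sInf.mpr fun W hW => hW.2 s f (Submodule.mem_sInf.mp hf W hW) hd

lemma X_pow_mul_mem_V {f : MvPolynomial (Fin n) K} (hf : f ∈ V F d) (i : Fin n) (a : ℕ)
    (hd : (X i ^ a * f).totalDegree ≤ d) : X i ^ a * f ∈ V F d := by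
  rw [X_pow_eq_monomial] at hd ⊢
  exact monomial_mul_mem_V hf _ hd

lemma V_le {W : Submodule K (MvPolynomial (Fin n) K)}
    (hF : ∀ f ∈ F, f.totalDegree ≤ d → f ∈ W)
    (hW : ∀ s : Fin n →₀ ℕ, ∀ f ∈ W, (monomial s (1 : K) * f).totalDegree ≤ d →
      monomial s (1 : K) * f ∈ W) :
    V F d ≤ W :=
  sInf_le ⟨hF, hW⟩

lemma V_mono {e : ℕ} (h : e ≤ d) : V F e ≤ V F d :=
  V_le (fun _ hf he => mem_V_of_mem hf (he.trans h))
    (fun s _ hf hs => monomial_mul_mem_V hf s (hs.trans h))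

end SpanOfDegree

section SpanOfDegreeFk

variable {n : ℕ} [Field K] [DecidableEq K] {i j : Fin n}

lemma V_Fk_le_pureCoeffs (hk : 1 < k) (hij : i ≠ j) :
    V (Fk K k i j) k ≤ pureCoeffs K k i j ⊓ pureCoeffs K k j i :=
  V_le (fun f hf _ => ⟨mem_pureCoeffs_of_mem_Fk hk hij f hf,
      mem_pureCoeffs_of_mem_Fk hk hij.symm f (by rwa [Fk_comm])⟩)
    (fun s _ hf hd => monomial_mul_mem_inf_pureCoeffs hf s hd)

lemma X_notMem_V_Fk (hk : 1 < k) (hij : i ≠ j) :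
    (X i : MvPolynomial (Fin n) K) ∉ V (Fk K k i j) k := fun h =>
  X_notMem_pureCoeffs (by omega) hij (V_Fk_le_pureCoeffs hk hij h).1

lemma totalDegree_le_of_mem_Fk (hk : 1 < k) : ∀ f ∈ Fk K k i j, f.totalDegree ≤ k := by
  have hX_pow_add_X (a b : Fin n) : (X a ^ k + X b : MvPolynomial (Fin n) K).totalDegree ≤ k :=
    (totalDegree_add _ _).trans (max_le (totalDegree_X_pow a k).le (by rw [totalDegree_X]; omega))
  intro f hf
  simp only [Fk, Finset.mem_insert, Finset.mem_singleton] at hf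
  rcases hf with rfl | rfl | rfl
  · exact hX_pow_add_X i j
  · exact hX_pow_add_X j i
  · exact (totalDegree_X_mul_X_le i j).trans hk

lemma X_mem_V_Fk (hk : 1 < k) : (X i : MvPolynomial (Fin n) K) ∈ V (Fk K k i j) (k + 1) := by
  have deg := totalDegree_le_of_mem_Fk (K := K) hk (i := i) (j := j)
  have mem (f) (hf : f ∈ Fk K k i j) : f ∈ V (Fk K k i j) (k + 1) :=
    mem_V_of_mem hf ((deg f hf).trans k.le_succ)
  have hg1 : X i ^ k + X j ∈ Fk K k i j := by simp [Fk]
  have hg2 : X j ^ k + X i ∈ Fk K k i j := by simp [Fk]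
  have hg3 : X i * X j ∈ Fk K k i j := by simp [Fk]
  obtain ⟨m, rfl⟩ := Nat.exists_eq_add_of_le' hk
  have xj_g1 := X_pow_mul_mem_V (mem _ hg1) j 1
    ((totalDegree_X_pow_mul_le _ _ _).trans (by linarith [deg _ hg1]))
  have xi_g3 := X_pow_mul_mem_V (mem _ hg3) i (m + 1)
    ((totalDegree_X_pow_mul_le _ _ _).trans (by linarith [totalDegree_X_mul_X_le (K := K) i j]))
  have xj_sq : X j ^ 2 ∈ V (Fk K (m + 2) i j) (m + 2 + 1) := by
    convert sub_mem xj_g1 xi_g3 using 1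
    ring
  have xj_pow := X_pow_mul_mem_V xj_sq j m
    ((totalDegree_X_pow_mul_le _ _ _).trans (by rw [totalDegree_X_pow]; omega))
  convert sub_mem (mem _ hg2) xj_pow using 1
  ring

end SpanOfDegreeFk

section GrobnerBasis

variable {n : ℕ} [Field K]

lemma lm_eq_degree (m : MonomialOrder (Fin n)) (f : MvPolynomial (Fin n) K) :
    lm m f = m.degree f := rfl

lemma mdeg_eq_degree (s : Fin n →₀ ℕ) : mdeg s = s.degree := rfl

lemma isGrobnerBasis_X [DecidableEq K] (m : MonomialOrder (Fin 2))
    {I : Ideal (MvPolynomial (Fin 2) K)} (h0 : X 0 ∈ I) (h1 : X 1 ∈ I)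
    (hI : I ≤ RingHom.ker constantCoeff) : IsGrobnerBasis m I {X 0, X 1} := by
  refine ⟨by simp [Set.insert_subset_iff, h0, h1], fun f hf hf0 => ?_⟩
  have hdeg : m.degree f ≠ 0 := by
    intro h
    have hsupp := m.degree_mem_support hf0
    rw [h, mem_support_iff] at hsupp
    exact hsupp (hI hf)
  obtain ⟨i, hi⟩ : ∃ i, m.degree f i ≠ 0 := by
    by_contra! h
    exact hdeg (Finsupp.ext h)
  refine ⟨X i, by fin_cases i <;> simp, X_ne_zero i, ?_⟩
  rw [lm_eq_degree, lm_eq_degree, m.degree_X]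
  exact Finsupp.single_le_iff.mpr (Nat.one_le_iff_ne_zero.mpr hi)

lemma isReducedGB_X [DecidableEq K] (m : MonomialOrder (Fin 2))
    {I : Ideal (MvPolynomial (Fin 2) K)} (h0 : X 0 ∈ I) (h1 : X 1 ∈ I)
    (hI : I ≤ RingHom.ker constantCoeff) : IsReducedGB m I {X 0, X 1} := by
  refine ⟨isGrobnerBasis_X m h0 h1 hI, ?_, ?_⟩
  · simp [lm_eq_degree, m.degree_X, coeff_X]
  · intro g hg g' hg' hne s hs
    simp only [Finset.mem_insert, Finset.mem_singleton] at hg hg'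
    rcases hg with rfl | rfl <;> rcases hg' with rfl | rfl <;>
      simp_all [support_X, lm_eq_degree, m.degree_X]

lemma not_degree_le_single_of_mem_pureCoeffs {m : MonomialOrder (Fin n)} (hm : DegCompatible m)
    (hk : 1 < k) {i j : Fin n} {g : MvPolynomial (Fin n) K} (hg : g ∈ pureCoeffs K k i j)
    (hg0 : g ≠ 0) : ¬ m.degree g ≤ single i 1 := by
  intro hle
  have hsupp := m.degree_mem_support hg0
  obtain ⟨a, ha⟩ : ∃ a, m.degree g = single i a := ⟨_, eq_single_of_le_single hle⟩
  rw [ha, Finsupp.single_le_single] at hle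
  rw [ha, mem_support_iff] at hsupp
  interval_cases a
  · exact hsupp (hg.2 0 (by omega) (by omega))
  · refine hsupp (hg.1.trans (m.coeff_eq_zero_of_lt ?_))
    rw [ha]
    exact hm _ _ (by simp only [mdeg_eq_degree, Finsupp.degree_single]; omega)

lemma lt_of_isGrobnerBasis_of_subset_V [DecidableEq K] {m : MonomialOrder (Fin n)}
    (hm : DegCompatible m) (hk : 1 < k) {i j : Fin n} (hij : i ≠ j) {e : ℕ}
    {I : Ideal (MvPolynomial (Fin n) K)} (hi : X i ∈ I) {G : Finset (MvPolynomial (Fin n) K)}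
    (hGV : ∀ g ∈ G, g ∈ V (Fk K k i j) e) (hG : IsGrobnerBasis m I G) : k < e := by
  by_contra! he
  obtain ⟨g, hgG, hg0, hle⟩ := hG.2 _ hi (X_ne_zero i)
  rw [lm_eq_degree, lm_eq_degree, m.degree_X] at hle
  exact not_degree_le_single_of_mem_pureCoeffs hm hk
    (V_Fk_le_pureCoeffs hk hij (V_mono he (hGV g hgG))).1 hg0 hle

end GrobnerBasis

section Regularity

variable {n : ℕ} [Field K]

lemma topPart_of_isHomogeneous {p : MvPolynomial (Fin n) K} {d : ℕ} (hp : p.IsHomogeneous d) :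
    topPart p = p := by
  rcases eq_or_ne p 0 with rfl | hp0
  · simp [topPart]
  rw [topPart, hp.totalDegree hp0, homogeneousComponent_of_mem hp, if_pos rfl]

lemma topPart_add_of_isHomogeneous {p q : MvPolynomial (Fin n) K} {d e : ℕ}
    (hp : p.IsHomogeneous d) (hp0 : p ≠ 0) (hq : q.IsHomogeneous e) (hed : e < d) :
    topPart (p + q) = p := by
  have hlt : q.totalDegree < p.totalDegree :=
    hp.totalDegree hp0 ▸ hq.totalDegree_le.trans_lt hed
  have hdeg : (p + q).totalDegree = d := by
    rw [totalDegree_add_eq_left_of_totalDegree_lt hlt, hp.totalDegree hp0]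
  rw [topPart, hdeg, map_add, homogeneousComponent_of_mem hp, homogeneousComponent_of_mem hq,
    if_pos rfl, if_neg hed.ne', add_zero]

variable [DecidableEq K]

lemma topPart_image_Fk (hk : 1 < k) (i j : Fin n) :
    topPart '' (Fk K k i j : Set (MvPolynomial (Fin n) K)) =
      (fun s => monomial s (1 : K)) '' {single i k, single j k, single i 1 + single j 1} := by
  have top (a b : Fin n) : topPart (X a ^ k + X b : MvPolynomial (Fin n) K) = X a ^ k :=
    topPart_add_of_isHomogeneous (isHomogeneous_X_pow a k) (pow_ne_zero _ (X_ne_zero a))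
      (isHomogeneous_X K b) hk
  simp only [Fk, Finset.coe_insert, Finset.coe_singleton, Set.image_insert_eq, Set.image_singleton,
    top, topPart_of_isHomogeneous ((isHomogeneous_X K i).mul (isHomogeneous_X K j))]
  simp only [X_pow_eq_monomial, X_mul_X_eq_monomial]

lemma mem_span_topPart_Fk_iff (hk : 1 < k) {p : MvPolynomial (Fin 2) K} :
    p ∈ Ideal.span (topPart '' (Fk K k (0 : Fin 2) 1 : Set (MvPolynomial (Fin 2) K))) ↔
      ∀ s ∈ p.support, k ≤ s 0 ∨ k ≤ s 1 ∨ (1 ≤ s 0 ∧ 1 ≤ s 1) := by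
  rw [topPart_image_Fk hk, mem_ideal_span_monomial_image]
  simp [Finsupp.le_def, Fin.forall_fin_two]

lemma regAt_Fk (hk : 1 < k) : regAt (Fk K k (0 : Fin 2) 1) k := by
  intro p hp
  rw [mem_span_topPart_Fk_iff hk]
  intro s hs
  have hdeg : s.degree = k := by
    rw [Finsupp.degree_eq_weight_one]
    exact hp (mem_support_iff.mp hs)
  rw [Finsupp.degree_eq_sum, Fin.sum_univ_two] at hdeg
  omega

lemma le_of_regAt_Fk (hk : 1 < k) {e : ℕ} (he : regAt (Fk K k (0 : Fin 2) 1) e) : k ≤ e := by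
  have := (mem_span_topPart_Fk_iff hk).mp (he _ (isHomogeneous_X_pow 0 e)) (single 0 e)
    (by simp [X_pow_eq_monomial])
  simp only [Finsupp.single_eq_same, Finsupp.single_eq_of_ne, ne_eq, one_ne_zero,
    not_false_eq_true] at this
  omega

end Regularity

end

/-- The full optimality example: for `F_k = {x^k + y, y^k + x, xy}` with `k > 1`:
(a) `d_reg(F_k) = k`; (b) `x, y ∈ (F_k)` and `{x, y}` is the reduced Gröbner basis for every
term order; (c) `x, y ∉ V_{F_k,k}` but `x, y ∈ V_{F_k,k+1}`; hence `sd_σ(F_k) = k + 1`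
for every degree-compatible term order `σ`. -/
theorem stmt6 (K : Type*) [Field K] [DecidableEq K] (k : ℕ) (hk : 1 < k) :
    let Fk : Finset (MvPolynomial (Fin 2) K) :=
      {(X 0) ^ k + X 1, (X 1) ^ k + X 0, X 0 * X 1}
    IsLeast {e | regAt Fk e} k ∧
      (X 0 : MvPolynomial (Fin 2) K) ∈ Ideal.span (Fk : Set (MvPolynomial (Fin 2) K)) ∧
      (X 1 : MvPolynomial (Fin 2) K) ∈ Ideal.span (Fk : Set (MvPolynomial (Fin 2) K)) ∧
      (∀ m : MonomialOrder (Fin 2),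
        IsReducedGB m (Ideal.span (Fk : Set (MvPolynomial (Fin 2) K)))
          {(X 0 : MvPolynomial (Fin 2) K), X 1}) ∧
      (X 0 : MvPolynomial (Fin 2) K) ∉ V Fk k ∧
      (X 1 : MvPolynomial (Fin 2) K) ∉ V Fk k ∧
      (X 0 : MvPolynomial (Fin 2) K) ∈ V Fk (k + 1) ∧
      (X 1 : MvPolynomial (Fin 2) K) ∈ V Fk (k + 1) ∧
      ∀ m : MonomialOrder (Fin 2), DegCompatible m →
        IsLeast {e | ∃ G : Finset (MvPolynomial (Fin 2) K),
          (∀ g ∈ G, g ∈ V Fk e) ∧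
            IsGrobnerBasis m (Ideal.span (Fk : Set (MvPolynomial (Fin 2) K))) G} (k + 1) := by
  intro F
  have hF : F = Fk K k 0 1 := rfl
  have h01 : (0 : Fin 2) ≠ 1 := by decide
  have hX0 : X 0 ∈ Ideal.span (F : Set (MvPolynomial (Fin 2) K)) := X_mem_span_Fk hk
  have hX1 : X 1 ∈ Ideal.span (F : Set (MvPolynomial (Fin 2) K)) := by
    rw [hF, ← Fk_comm]
    exact X_mem_span_Fk hk
  have hI : Ideal.span (F : Set (MvPolynomial (Fin 2) K)) ≤ RingHom.ker constantCoeff :=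
    span_Fk_le_ker_constantCoeff (by omega)
  have hV0 : X 0 ∈ V F (k + 1) := X_mem_V_Fk hk
  have hV1 : X 1 ∈ V F (k + 1) := by
    rw [hF, ← Fk_comm]
    exact X_mem_V_Fk hk
  refine ⟨⟨regAt_Fk hk, fun e => le_of_regAt_Fk hk⟩, hX0, hX1,
    fun m => isReducedGB_X m hX0 hX1 hI, X_notMem_V_Fk hk h01, ?_, hV0, hV1,
    fun m hm => ⟨⟨{X 0, X 1}, by simp [hV0, hV1], isGrobnerBasis_X m hX0 hX1 hI⟩, ?_⟩⟩
  · rw [hF, ← Fk_comm]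
    exact X_notMem_V_Fk hk h01.symm
  · rintro e ⟨G, hGV, hGB⟩
    exact lt_of_isGrobnerBasis_of_subset_V hm hk h01 hX0 hGV hGB
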